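/- arXiv:2010.02668 — 6 statements merged into one kernel-verified Lean document; each statement's English description precedes it below -/
import Mathlib

section
/- Let m and n be coprime positive integers. Then in the polynomial ring ℤ[X], the n-th cyclotomic polynomial evaluated at X^m factors as Φ_n(X^m) = ∏_{d ∣ m} Φ_{d·n}(X), where the product runs over all positive divisors d of m. -/
open Polynomial

theorem cyclotomic_expand_eq_prod_of_coprime (m n : ℕ) (hm : 0 < m) (hn : 0 < n)
    (h : Nat.Coprime m n) :
    (cyclotomic n ℤ).comp (X ^ m) = ∏ d ∈ m.divisors, cyclotomic (d * n) ℤ := by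
  rw [← expand_eq_comp_X_pow]
  induction m using Nat.strong_induction_on with
  | _ m ih =>
    rcases eq_or_ne m 1 with rfl | hm1
    · simp
    · obtain ⟨p, hp, hpm⟩ := Nat.exists_prime_and_dvd hm1
      obtain ⟨k, rfl⟩ := hpm
      have hp0 : 0 < p := hp.pos
      have hk : 0 < k := Nat.pos_of_ne_zero (by rintro rfl; simp at hm)
      have hkm : k < p * k := by nlinarith [hp.two_le]
      have hkn : Nat.Coprime k n := Nat.Coprime.coprime_dvd_left ⟨p, mul_comm p k⟩ h
      have hpn : ¬ p ∣ n := fun hd => by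
        have h1 : p ∣ Nat.gcd (p * k) n := Nat.dvd_gcd (dvd_mul_right p k) hd
        rw [h] at h1
        exact hp.one_lt.ne' (Nat.eq_one_of_dvd_one h1)
      have key : ∀ d : ℕ, (expand ℤ p) (cyclotomic (d * n) ℤ) =
          cyclotomic (d * n * p) ℤ * (if p ∣ d then 1 else cyclotomic (d * n) ℤ) := by
        intro d
        by_cases hpd : p ∣ d
        · rw [if_pos hpd, mul_one,
            cyclotomic_expand_eq_cyclotomic hp (hpd.mul_right n) ℤ]
        · have : ¬ p ∣ d * n := fun hc => by
            rcases (Nat.Prime.dvd_mul hp).mp hc with h1 | h1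
            exacts [hpd h1, hpn h1]
          rw [if_neg hpd, cyclotomic_expand_eq_cyclotomic_mul hp this ℤ]
      rw [expand_mul, ih k hkm hk hkn, map_prod, mul_comm p k]
      simp_rw [key]
      rw [Finset.prod_mul_distrib]
      -- LHS second factor
      have h2 : (∏ d ∈ k.divisors, (if p ∣ d then 1 else cyclotomic (d * n) ℤ)) =
          ∏ d ∈ k.divisors.filter (fun d => ¬ p ∣ d), cyclotomic (d * n) ℤ := by
        rw [Finset.prod_filter]
        exact Finset.prod_congr rfl fun d _ => by by_cases hpd : p ∣ d <;> simp [hpd]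
      rw [h2]
      -- RHS: split divisors of k*p by divisibility by p
      rw [← Finset.prod_filter_mul_prod_filter_not (k * p).divisors (fun e => p ∣ e)]
      congr 1
      · -- ∏ d ∈ k.divisors, Φ (d*n*p) = ∏ e ∈ filter (p ∣ ·), Φ (e*n)
        have himg : (k * p).divisors.filter (fun e => p ∣ e) =
            k.divisors.image (fun d => d * p) := by
          ext e
          simp only [Finset.mem_filter, Nat.mem_divisors, Finset.mem_image]
          constructor
          · rintro ⟨⟨he, hne⟩, d, rfl⟩
            refine ⟨d, ⟨?_, hk.ne'⟩, mul_comm d p⟩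
            exact (mul_dvd_mul_iff_left hp0.ne').mp (by rwa [mul_comm k p] at he)
          · rintro ⟨d, ⟨hd, _⟩, rfl⟩
            exact ⟨⟨mul_dvd_mul_right hd p, by positivity⟩, ⟨d, mul_comm d p⟩⟩
        rw [himg, Finset.prod_image (fun a _ b _ hab =>
          Nat.eq_of_mul_eq_mul_right hp0 hab)]
        exact Finset.prod_congr rfl fun d _ => by ring_nf
      · -- filters agree
        have hfilt : (k * p).divisors.filter (fun e => ¬ p ∣ e) =
            k.divisors.filter (fun e => ¬ p ∣ e) := by
          ext e
          simp only [Finset.mem_filter, Nat.mem_divisors]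
          constructor
          · rintro ⟨⟨he, _⟩, hpe⟩
            refine ⟨⟨?_, hk.ne'⟩, hpe⟩
            exact (Nat.Coprime.dvd_of_dvd_mul_right
              ((Nat.Prime.coprime_iff_not_dvd hp).mpr hpe).symm he)
          · rintro ⟨⟨he, _⟩, hpe⟩
            exact ⟨⟨he.mul_right p, by positivity⟩, hpe⟩
        rw [hfilt]
end

section
/- Let m and n be coprime positive integers. Then, in the field of rational functions over ℚ, Φ_{n·m}(X) = ∏_{d ∣ m} Φ_n(X^d)^{μ(m/d)}, where the product runs over all positive divisors d of m, μ is the Möbius function, and the factors with negative exponent are interpreted as inverses in the field of rational functions. -/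
open Polynomial ArithmeticFunction

/-!
Möbius inversion of `X ^ k - 1 = ∏_{a ∣ k} Φ_a(X)`, taken after the substitution `X ↦ X ^ d`,
gives `Φ_n(X ^ d) = ∏_{a ∣ n} (X ^ (a d) - 1) ^ μ(n / a)`. For coprime `n` and `m` every divisor
of `n m` is uniquely a product `a d` with `a ∣ n`, `d ∣ m`, and `μ(n m / (a d)) = μ(n / a) μ(m / d)`,
so the same formula for `Φ_{n m}` regroups as `∏_{d ∣ m} Φ_n(X ^ d) ^ μ(m / d)`.
-/

theorem Nat.Coprime.prod_divisors_mul {M : Type*} [CommMonoid M] {m n : ℕ} (h : m.Coprime n)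
    (f : ℕ → M) :
    ∏ e ∈ (m * n).divisors, f e = ∏ a ∈ m.divisors, ∏ b ∈ n.divisors, f (a * b) := by
  rw [h.divisors_mul, Finset.prod_map, ← Finset.prod_product']
  exact Finset.prod_attach _ fun p : ℕ × ℕ => f (p.1 * p.2)

theorem ArithmeticFunction.IsMultiplicative.map_mul_div_mul_of_coprime {R : Type*}
    [MonoidWithZero R] {f : ArithmeticFunction R} (hf : f.IsMultiplicative) {m n a b : ℕ}
    (h : m.Coprime n) (ha : a ∣ m) (hb : b ∣ n) :
    f (m * n / (a * b)) = f (m / a) * f (n / b) := by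
  rw [← Nat.div_mul_div_comm ha hb,
    hf.map_mul_of_coprime ((h.coprime_div_left ha).coprime_div_right hb)]

theorem algebraMap_expand_cyclotomic_eq_prod_moebius {R : Type*} [CommRing R] [IsDomain R]
    (n : ℕ) {d : ℕ} (hd : 0 < d) :
    algebraMap R[X] (RatFunc R) (expand R d (cyclotomic n R)) =
      ∏ a ∈ n.divisors, algebraMap R[X] (RatFunc R) (X ^ (a * d) - 1) ^ moebius (n / a) := by
  rcases n.eq_zero_or_pos with rfl | hn
  · simp
  have hprod : ∀ k > 0,
      ∏ a ∈ k.divisors, algebraMap R[X] (RatFunc R) (expand R d (cyclotomic a R)) =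
        algebraMap R[X] (RatFunc R) (X ^ (k * d) - 1) := fun k hk => by
    rw [← map_prod, ← map_prod, prod_cyclotomic_eq_X_pow_sub_one hk, map_sub, map_pow, expand_X,
      map_one, ← pow_mul, mul_comm]
  rw [← (prod_eq_iff_prod_pow_moebius_eq_of_nonzero _ _).1 hprod n hn,
    Nat.prod_divisorsAntidiagonal'
      (fun a b => algebraMap R[X] (RatFunc R) (X ^ (b * d) - 1) ^ moebius a)]
  · intro k _
    rw [Ne, IsFractionRing.to_map_eq_zero_iff, expand_eq_zero hd]
    exact cyclotomic_ne_zero k R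
  · intro k hk
    rw [Ne, IsFractionRing.to_map_eq_zero_iff]
    exact (monic_X_pow_sub_C 1 (Nat.mul_pos hk hd).ne').ne_zero

theorem cyclotomic_mul_eq_prod_zpow_of_coprime_general (m n : ℕ)
    (h : Nat.Coprime m n) :
    (algebraMap (Polynomial ℚ) (RatFunc ℚ) (cyclotomic (n * m) ℚ)) =
      ∏ d ∈ m.divisors,
        (algebraMap (Polynomial ℚ) (RatFunc ℚ) ((cyclotomic n ℚ).comp (X ^ d))) ^
          (moebius (m / d)) := by
  calc algebraMap ℚ[X] (RatFunc ℚ) (cyclotomic (n * m) ℚ)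
      = ∏ e ∈ (n * m).divisors,
          algebraMap ℚ[X] (RatFunc ℚ) (X ^ e - 1) ^ moebius (n * m / e) := by
        rw [cyclotomic_eq_prod_X_pow_sub_one_pow_moebius, Nat.prod_divisorsAntidiagonal'
          (fun a b => algebraMap ℚ[X] (RatFunc ℚ) (X ^ b - 1) ^ moebius a)]
    _ = ∏ d ∈ m.divisors, (∏ a ∈ n.divisors,
          algebraMap ℚ[X] (RatFunc ℚ) (X ^ (a * d) - 1) ^ moebius (n / a)) ^ moebius (m / d) := by
        rw [h.symm.prod_divisors_mul, Finset.prod_comm]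
        refine Finset.prod_congr rfl fun d hd => ?_
        rw [← Finset.prod_zpow]
        refine Finset.prod_congr rfl fun a ha => ?_
        rw [isMultiplicative_moebius.map_mul_div_mul_of_coprime h.symm
          (Nat.dvd_of_mem_divisors ha) (Nat.dvd_of_mem_divisors hd), zpow_mul]
    _ = _ := by
        refine Finset.prod_congr rfl fun d hd => ?_
        rw [← expand_eq_comp_X_pow,
          algebraMap_expand_cyclotomic_eq_prod_moebius n (Nat.pos_of_mem_divisors hd)]

theorem cyclotomic_mul_eq_prod_zpow_of_coprime (m n : ℕ) (hm : 0 < m) (hn : 0 < n)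
    (h : Nat.Coprime m n) :
    (algebraMap (Polynomial ℚ) (RatFunc ℚ) (cyclotomic (n * m) ℚ)) =
      ∏ d ∈ m.divisors,
        (algebraMap (Polynomial ℚ) (RatFunc ℚ) ((cyclotomic n ℚ).comp (X ^ d))) ^
          (moebius (m / d)) :=
  cyclotomic_mul_eq_prod_zpow_of_coprime_general m n h
end

section
/- Let n be a positive integer and define the Ramanujan sum c_n(q) = ∑_{1 ≤ k ≤ n, gcd(k,n)=1} e^{2πikq/n} for q ≥ 0. Then for every z ∈ ℂ with |z| > 1, the series ∑_{q=0}^∞ c_n(q)/z^{q+1} converges and equals Φ_n′(z)/Φ_n(z), the logarithmic derivative of the n-th cyclotomic polynomial at z. -/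
/-!
Over `ℂ`, `Φ_n = ∏ (X - μ)` over the primitive `n`-th roots of unity `μ`, so
`Φ_n'(z) / Φ_n(z) = ∑_μ 1 / (z - μ)`. Since `‖μ‖ = 1 < ‖z‖`, each term expands as the geometric
series `∑_q μ^q / z^(q+1)`, and collecting the coefficient of `z^-(q+1)` gives `∑_μ μ^q = c_n(q)`.
-/

open Polynomial Real Complex

/-- The Ramanujan sum `c_n(q)`, the sum of the `q`-th powers of the primitive
`n`-th roots of unity. -/
noncomputable def ramanujanSum (n q : ℕ) : ℂ :=
  ∑ k ∈ (Finset.Icc 1 n).filter (fun k => Nat.gcd k n = 1),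
    Complex.exp (2 * Real.pi * Complex.I * k * q / n)

theorem Finset.sum_Icc_one_eq_sum_range {M : Type*} [AddCommMonoid M] {f : ℕ → M} {n : ℕ}
    (h : f n = f 0) : ∑ k ∈ Icc 1 n, f k = ∑ k ∈ range n, f k := by
  rcases n.eq_zero_or_pos with rfl | hn
  · simp
  rw [show Icc 1 n = Ioc 0 n from Icc_add_one_left_eq_Ioc 0 n, range_eq_Ico,
    ← sum_Ioo_add_eq_sum_Ioc hn, ← add_sum_Ioo_eq_sum_Ico hn, h, add_comm]

theorem IsPrimitiveRoot.primitiveRoots_eq_image {R : Type*} [CommRing R] [IsDomain R]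
    [DecidableEq R] {ζ : R} {n : ℕ} (hζ : IsPrimitiveRoot ζ n) :
    primitiveRoots n R = {k ∈ Finset.range n | k.Coprime n}.image (ζ ^ ·) := by
  rcases n.eq_zero_or_pos with rfl | hn
  · simp
  have : NeZero n := ⟨hn.ne'⟩
  ext μ
  simp [mem_primitiveRoots hn, hζ.isPrimitiveRoot_iff, and_assoc]

theorem IsPrimitiveRoot.sum_primitiveRoots {R M : Type*} [CommRing R] [IsDomain R]
    [AddCommMonoid M] {ζ : R} {n : ℕ} (hζ : IsPrimitiveRoot ζ n) (f : R → M) :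
    ∑ μ ∈ primitiveRoots n R, f μ = ∑ k ∈ Finset.range n with k.Coprime n, f (ζ ^ k) := by
  classical
  rw [hζ.primitiveRoots_eq_image, Finset.sum_image]
  intro k hk j hj
  simp only [Finset.coe_filter, Finset.mem_range, Set.mem_ofPred_eq] at hk hj
  exact hζ.pow_inj hk.1 hj.1

theorem ramanujanSum_eq_sum_primitiveRoots (n q : ℕ) :
    ramanujanSum n q = ∑ μ ∈ primitiveRoots n ℂ, μ ^ q := by
  rcases eq_or_ne n 0 with rfl | hn
  · simp [ramanujanSum]
  have hζ := Complex.isPrimitiveRoot_exp n hn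
  have hexp (k : ℕ) :
      Complex.exp (2 * π * I * k * q / n) = (Complex.exp (2 * π * I / n) ^ k) ^ q := by
    rw [← pow_mul, ← Complex.exp_nat_mul]
    congr 1
    push_cast
    ring
  rw [hζ.sum_primitiveRoots, ramanujanSum, Finset.sum_filter, Finset.sum_filter]
  simp_rw [hexp, Nat.coprime_iff_gcd_eq_one]
  exact Finset.sum_Icc_one_eq_sum_range (by simp [hζ.pow_eq_one])

theorem hasSum_pow_div_pow_succ {K : Type*} [NormedField K] {μ z : K} (h : ‖μ‖ < ‖z‖) :
    HasSum (fun q : ℕ => μ ^ q / z ^ (q + 1)) (z - μ)⁻¹ := by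
  have hz : z ≠ 0 := norm_pos_iff.mp ((norm_nonneg μ).trans_lt h)
  have hμz : ‖μ / z‖ < 1 := by rwa [norm_div, div_lt_one ((norm_nonneg μ).trans_lt h)]
  convert (hasSum_geometric_of_norm_lt_one hμz).div_const z using 1
  · ext q
    rw [div_pow, pow_succ, div_div]
  · rw [div_eq_mul_inv, ← mul_inv, sub_mul, one_mul, div_mul_cancel₀ μ hz]

theorem Polynomial.eval_derivative_div_eval_prod_X_sub_C {K : Type*} [Field K] (s : Finset K) {z : K}
    (hz : ∀ μ ∈ s, z ≠ μ) :
    (∏ μ ∈ s, (X - C μ)).derivative.eval z / (∏ μ ∈ s, (X - C μ)).eval z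
      = ∑ μ ∈ s, (z - μ)⁻¹ := by
  have hne : (∏ μ ∈ s, (X - C μ)).eval z ≠ 0 := by
    simpa [eval_prod, Finset.prod_ne_zero_iff, sub_eq_zero] using hz
  rw [(Splits.prod fun μ _ => Splits.X_sub_C μ).eval_derivative_div_eval_of_ne_zero hne,
    roots_prod_X_sub_C]
  simp only [one_div]
  rfl

theorem logDeriv_cyclotomic_eq_tsum_ramanujanSum_general (n : ℕ) (z : ℂ)
    (hz : 1 < ‖z‖) :
    HasSum (fun q : ℕ => ramanujanSum n q / z ^ (q + 1))
      ((cyclotomic n ℂ).derivative.eval z / (cyclotomic n ℂ).eval z) := by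
  rcases eq_or_ne n 0 with rfl | hn
  · simp [ramanujanSum]
  have hζ := Complex.isPrimitiveRoot_exp n hn
  have hμ : ∀ μ ∈ primitiveRoots n ℂ, ‖μ‖ = 1 := fun μ hμ =>
    Complex.norm_eq_one_of_pow_eq_one (isPrimitiveRoot_of_mem_primitiveRoots hμ).pow_eq_one hn
  rw [cyclotomic_eq_prod_X_sub_primitiveRoots hζ, eval_derivative_div_eval_prod_X_sub_C _
    fun μ hμz => by rintro rfl; linarith [hμ _ hμz]]
  simp_rw [ramanujanSum_eq_sum_primitiveRoots, Finset.sum_div]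
  exact hasSum_sum fun μ hμz => hasSum_pow_div_pow_succ (by linarith [hμ μ hμz])

theorem logDeriv_cyclotomic_eq_tsum_ramanujanSum (n : ℕ) (hn : 0 < n) (z : ℂ)
    (hz : 1 < ‖z‖) :
    HasSum (fun q : ℕ => ramanujanSum n q / z ^ (q + 1))
      ((cyclotomic n ℂ).derivative.eval z / (cyclotomic n ℂ).eval z) :=
  logDeriv_cyclotomic_eq_tsum_ramanujanSum_general n z hz
end

section
/- Let m and n be coprime positive integers and let q ≥ 0. Then ∑_{d ∣ m} c_{d·n}(q) = m · c_n(q/m) if m divides q, and ∑_{d ∣ m} c_{d·n}(q) = 0 otherwise, where the sum runs over all positive divisors d of m. -/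
/-!
With `ζ = exp (2πi / mn)`, sorting the `k ≤ mn` coprime to `n` by `g = gcd k m` and writing
`k = g k'` turns the left side into `∑_{k ≤ mn, (k,n) = 1} ζ^(kq)`. Writing `k = j + n t` with
`1 ≤ j ≤ n`, `t < m` factors this as `∑_j ζ^(jq) · ∑_{t < m} (ζ^(nq))^t`, and since `ζ^n`
is a primitive `m`-th root of unity the geometric sum is `m` or `0` according as `m ∣ q`.
-/

open Finset Complex
open scoped Real

theorem IsPrimitiveRoot.geom_sum_pow_eq_ite {R : Type*} [CommRing R] [IsDomain R] {ζ : R} {m : ℕ}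
    (hζ : IsPrimitiveRoot ζ m) (q : ℕ) :
    ∑ t ∈ range m, (ζ ^ q) ^ t = if m ∣ q then (m : R) else 0 := by
  split_ifs with hq
  · simp [(hζ.pow_eq_one_iff_dvd q).mpr hq]
  · have hne : ζ ^ q - 1 ≠ 0 := sub_ne_zero.mpr fun h => hq ((hζ.pow_eq_one_iff_dvd q).mp h)
    have hmul := mul_geom_sum (ζ ^ q) m
    rw [← pow_mul, pow_mul', hζ.pow_eq_one, one_pow, sub_self] at hmul
    exact (mul_eq_zero.mp hmul).resolve_left hne

theorem sum_Icc_mul_eq_sum_range_sum_Icc {M : Type*} [AddCommMonoid M] (f : ℕ → M) (m n : ℕ) :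
    ∑ k ∈ Icc 1 (m * n), f k = ∑ t ∈ range m, ∑ j ∈ Icc 1 n, f (j + n * t) := by
  have hIcc (b : ℕ) : Icc 1 b = Ioc 0 b := Icc_add_one_left_eq_Ioc 0 b
  induction m with
  | zero => simp
  | succ m ih =>
    have hshift : Ioc (m * n) ((m + 1) * n) = (Ioc 0 n).map (addRightEmbedding (n * m)) := by
      rw [map_add_right_Ioc]; congr 1 <;> ring
    rw [sum_range_succ, ← ih, hIcc, hIcc, hIcc,
      ← sum_Ioc_consecutive _ (Nat.zero_le (m * n)) (by nlinarith), hshift, sum_map]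
    rfl

theorem sum_coprime_Icc_mul_eq_sum_sum_range {M : Type*} [AddCommMonoid M] (f : ℕ → M)
    (m n : ℕ) :
    ∑ k ∈ Icc 1 (m * n) with k.Coprime n, f k =
      ∑ j ∈ Icc 1 n with j.Coprime n, ∑ t ∈ range m, f (j + n * t) := by
  rw [sum_filter, sum_Icc_mul_eq_sum_range_sum_Icc, sum_comm, sum_filter]
  simp only [Nat.coprime_add_mul_left_left, sum_ite_irrel, sum_const_zero]

theorem filter_gcd_eq_image_mul_right {g e n : ℕ} (hg : g ≠ 0) (h : g.Coprime n) :
    {k ∈ Icc 1 (g * e * n) | k.Coprime n ∧ k.gcd (g * e) = g} =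
      {k ∈ Icc 1 (e * n) | k.Coprime (e * n)}.image (· * g) := by
  ext k
  simp only [mem_filter, mem_Icc, mem_image]
  constructor
  · rintro ⟨⟨hk1, hk2⟩, hkn, hkg⟩
    obtain ⟨k', rfl⟩ : g ∣ k := hkg ▸ Nat.gcd_dvd_left k (g * e)
    rw [Nat.gcd_mul_left, Nat.mul_eq_left hg] at hkg
    refine ⟨k', ⟨⟨?_, ?_⟩, ?_⟩, mul_comm _ _⟩
    · exact Nat.one_le_iff_ne_zero.mpr (by rintro rfl; simp at hk1)
    · exact Nat.le_of_mul_le_mul_left (by rwa [mul_assoc] at hk2) (Nat.pos_of_ne_zero hg)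
    · exact Nat.Coprime.mul_right hkg (Nat.Coprime.coprime_mul_left hkn)
  · rintro ⟨k', ⟨⟨hk1, hk2⟩, hk'⟩, rfl⟩
    refine ⟨⟨Nat.one_le_iff_ne_zero.mpr (mul_ne_zero (by omega) hg), ?_⟩, ?_, ?_⟩
    · rw [mul_assoc, mul_comm]
      exact Nat.mul_le_mul_left g hk2
    · exact Nat.Coprime.mul_left hk'.coprime_mul_left_right h
    · rw [mul_comm k', Nat.gcd_mul_left, hk'.coprime_mul_right_right, mul_one]

theorem sum_divisors_sum_coprime_mul_div {M : Type*} [AddCommMonoid M] (f : ℕ → M) {m n : ℕ}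
    (hm : m ≠ 0) (h : m.Coprime n) :
    ∑ d ∈ m.divisors, ∑ k ∈ Icc 1 (d * n) with k.Coprime (d * n), f (k * (m / d)) =
      ∑ k ∈ Icc 1 (m * n) with k.Coprime n, f k := by
  rw [← Nat.sum_div_divisors,
    ← sum_fiberwise_of_maps_to (s := {k ∈ Icc 1 (m * n) | k.Coprime n}) (g := fun k => k.gcd m)
      fun k _ => Nat.mem_divisors.mpr ⟨Nat.gcd_dvd_right k m, hm⟩]
  refine sum_congr rfl fun g hg => ?_
  obtain ⟨e, rfl⟩ := Nat.dvd_of_mem_divisors hg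
  have hg0 : 0 < g := Nat.pos_of_ne_zero (left_ne_zero_of_mul hm)
  have he0 : 0 < e := Nat.pos_of_ne_zero (right_ne_zero_of_mul hm)
  rw [filter_filter, filter_gcd_eq_image_mul_right hg0.ne' (Nat.Coprime.coprime_mul_right h),
    sum_image fun a _ b _ hab => Nat.eq_of_mul_eq_mul_right hg0 hab,
    Nat.mul_div_cancel_left e hg0, Nat.mul_div_cancel g he0]

theorem cexp_two_pi_I_div_natCast_mul_pow (a b : ℕ) (ha : a ≠ 0) :
    exp (2 * π * I / ↑(a * b)) ^ a = exp (2 * π * I / b) := by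
  rcases eq_or_ne b 0 with rfl | hb
  · simp
  rw [← exp_nat_mul]
  congr 1
  push_cast
  field_simp

theorem ramanujanSum_eq_sum_pow (n q : ℕ) :
    ramanujanSum n q = ∑ k ∈ Icc 1 n with k.Coprime n, exp (2 * π * I / n) ^ (k * q) := by
  refine sum_congr rfl fun k _ => ?_
  rw [← exp_nat_mul]
  congr 1
  push_cast
  ring

theorem sum_ramanujanSum_divisors (m n : ℕ) (hm : 0 < m) (hn : 0 < n)
    (h : Nat.Coprime m n) (q : ℕ) :
    ∑ d ∈ m.divisors, ramanujanSum (d * n) q =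
      if m ∣ q then (m : ℂ) * ramanujanSum n (q / m) else 0 := by
  set ζ := exp (2 * π * I / ↑(m * n))
  have hζ : IsPrimitiveRoot ζ (m * n) := isPrimitiveRoot_exp _ (by positivity)
  have hterm (d : ℕ) (hd : d ∈ m.divisors) :
      ramanujanSum (d * n) q =
        ∑ k ∈ Icc 1 (d * n) with k.Coprime (d * n), ζ ^ (k * (m / d) * q) := by
    obtain ⟨e, rfl⟩ := Nat.dvd_of_mem_divisors hd
    have hdn : e * (d * n) = d * e * n := by ring
    rw [ramanujanSum_eq_sum_pow, ← cexp_two_pi_I_div_natCast_mul_pow e (d * n)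
      (right_ne_zero_of_mul hm.ne'), hdn, Nat.mul_div_cancel_left e (Nat.pos_of_mul_pos_right hm)]
    refine sum_congr rfl fun k _ => ?_
    rw [← pow_mul]
    ring
  calc ∑ d ∈ m.divisors, ramanujanSum (d * n) q
      = ∑ k ∈ Icc 1 (m * n) with k.Coprime n, ζ ^ (k * q) := by
        rw [sum_congr rfl hterm]
        exact sum_divisors_sum_coprime_mul_div (fun k => ζ ^ (k * q)) hm.ne' h
    _ = ∑ j ∈ Icc 1 n with j.Coprime n, ζ ^ (j * q) * ∑ t ∈ range m, ((ζ ^ n) ^ q) ^ t := by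
        rw [sum_coprime_Icc_mul_eq_sum_sum_range]
        refine sum_congr rfl fun j _ => ?_
        rw [mul_sum]
        refine sum_congr rfl fun t _ => ?_
        ring
    _ = _ := by
        rw [(hζ.pow (by positivity) (mul_comm m n)).geom_sum_pow_eq_ite]
        split_ifs with hq
        · obtain ⟨q', rfl⟩ := hq
          rw [ramanujanSum_eq_sum_pow, Nat.mul_div_cancel_left q' hm, mul_sum,
            ← cexp_two_pi_I_div_natCast_mul_pow m n hm.ne']
          refine sum_congr rfl fun j _ => ?_
          ring
        · simp
end

section
/- Let m and n be coprime positive integers and let q be a positive integer. Then c_{m·n}(q) = ∑_{d ∣ gcd(m,q)} d · c_n(q/d) · μ(m/d), where the sum runs over all positive divisors d of gcd(m,q). -/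
open ArithmeticFunction

/-!
Detecting `gcd(k, n) = 1` by `∑_{d ∣ gcd(k, n)} μ(d)` and summing the resulting geometric sums
gives Kluyver's formula `c_n(q) = ∑_{d ∣ gcd(n, q)} d μ(n/d)`. It exhibits `n ↦ c_n(q)` as the
Dirichlet convolution of `μ` with the multiplicative function `d ↦ d·[d ∣ q]`, so `c_n(q)` is
multiplicative in `n`, and it shows that `c_n(q)` depends only on `gcd(n, q)`. For
`d ∣ gcd(m, q)` with `m` coprime to `n` we have `gcd(n, q/d) = gcd(n, q)`, so the right-hand
side equals `c_n(q) ∑_{d ∣ gcd(m, q)} d μ(m/d) = c_n(q) c_m(q) = c_{mn}(q)`.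
-/

open Finset
open scoped ArithmeticFunction.Moebius

variable {R : Type*}

theorem sum_divisors_moebius [Ring R] (n : ℕ) :
    ∑ d ∈ n.divisors, (μ d : R) = if n = 1 then 1 else 0 := by
  rw [← one_apply, ← coe_moebius_mul_coe_zeta, coe_mul_zeta_apply]
  simp only [intCoe_apply]

theorem sum_Icc_filter_dvd {M : Type*} [AddCommMonoid M] (f : ℕ → M) (d n : ℕ) :
    ∑ k ∈ Icc 1 n with d ∣ k, f k = ∑ j ∈ Icc 1 (n / d), f (d * j) := by
  rcases Nat.eq_zero_or_pos d with rfl | hd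
  · rw [filter_false_of_mem fun k hk => by grind [zero_dvd_iff]]
    simp
  have himage : {k ∈ Icc 1 n | d ∣ k} = (Icc 1 (n / d)).image (d * ·) := by
    ext k
    simp only [mem_filter, mem_Icc, mem_image, Nat.le_div_iff_mul_le hd]
    constructor
    · rintro ⟨⟨hk1, hkn⟩, j, rfl⟩
      exact ⟨j, ⟨Nat.pos_of_mul_pos_left hk1, by rwa [mul_comm]⟩, rfl⟩
    · rintro ⟨j, ⟨hj1, hjn⟩, rfl⟩
      exact ⟨⟨Nat.mul_pos hd hj1, by rwa [mul_comm]⟩, dvd_mul_right d j⟩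
  rw [himage, sum_image fun _ _ _ _ h => Nat.eq_of_mul_eq_mul_left hd h]

theorem IsPrimitiveRoot.sum_Icc_pow_mul [CommRing R] [IsDomain R] {ζ : R} {N : ℕ}
    (hζ : IsPrimitiveRoot ζ N) (q : ℕ) :
    ∑ j ∈ Icc 1 N, ζ ^ (j * q) = if N ∣ q then (N : R) else 0 := by
  simp_rw [pow_mul']
  split_ifs with hNq
  · simp [(hζ.pow_eq_one_iff_dvd q).2 hNq]
  · have hne : ζ ^ q - 1 ≠ 0 := sub_ne_zero.2 fun h => hNq ((hζ.pow_eq_one_iff_dvd q).1 h)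
    have hgeom : ∑ j ∈ range N, (ζ ^ q) ^ j = 0 := by
      have := geom_sum_mul (ζ ^ q) N
      rw [← pow_mul, pow_mul', hζ.pow_eq_one, one_pow, sub_self] at this
      exact (mul_eq_zero.1 this).resolve_right hne
    rw [← Ico_add_one_right_eq_Icc, sum_Ico_eq_sum_range, Nat.add_sub_cancel]
    simp_rw [pow_add, pow_one, ← mul_sum, hgeom, mul_zero]

def idDvd (R : Type*) [Semiring R] (q : ℕ) : ArithmeticFunction R :=
  ⟨fun n => if n ∣ q then n else 0, by simp⟩

@[simp]
theorem idDvd_apply [Semiring R] (q n : ℕ) :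
    idDvd R q n = if n ∣ q then (n : R) else 0 :=
  rfl

theorem isMultiplicative_idDvd [Semiring R] (q : ℕ) :
    IsMultiplicative (idDvd R q) := by
  refine ⟨by simp, fun {m n} hmn => ?_⟩
  have hdvd : m * n ∣ q ↔ m ∣ q ∧ n ∣ q :=
    ⟨fun h => ⟨dvd_of_mul_right_dvd h, dvd_of_mul_left_dvd h⟩,
      fun h => hmn.mul_dvd_of_dvd_of_dvd h.1 h.2⟩
  simp only [idDvd_apply, hdvd]
  split_ifs <;> simp_all

theorem IsPrimitiveRoot.sum_Icc_coprime_pow_mul [CommRing R] [IsDomain R] {ζ : R} {n : ℕ}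
    (hζ : IsPrimitiveRoot ζ n) (q : ℕ) :
    ∑ k ∈ Icc 1 n with k.Coprime n, ζ ^ (k * q) =
      ((μ : ArithmeticFunction R) * idDvd R q) n := by
  rcases eq_or_ne n 0 with rfl | hn
  · simp
  calc ∑ k ∈ Icc 1 n with k.Coprime n, ζ ^ (k * q)
      = ∑ k ∈ Icc 1 n, ∑ d ∈ (k.gcd n).divisors, (μ d : R) * ζ ^ (k * q) := by
        rw [sum_filter]
        refine sum_congr rfl fun k _ => ?_
        rw [← sum_mul, sum_divisors_moebius]
        split_ifs <;> simp_all [Nat.coprime_iff_gcd_eq_one]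
    _ = ∑ d ∈ n.divisors, ∑ k ∈ Icc 1 n with d ∣ k, (μ d : R) * ζ ^ (k * q) := by
        refine sum_comm' fun k d => ?_
        simp only [mem_filter, Nat.mem_divisors, Nat.dvd_gcd_iff, ne_eq, Nat.gcd_eq_zero_iff, hn]
        tauto
    _ = ∑ d ∈ n.divisors, (μ d : R) * idDvd R q (n / d) := by
        refine sum_congr rfl fun d hd => ?_
        have hdn := Nat.dvd_of_mem_divisors hd
        have hζd : IsPrimitiveRoot (ζ ^ d) (n / d) :=
          hζ.pow_of_dvd (Nat.pos_of_dvd_of_pos hdn (Nat.pos_of_ne_zero hn)).ne' hdn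
        rw [← mul_sum, sum_Icc_filter_dvd, idDvd_apply, ← hζd.sum_Icc_pow_mul q]
        simp_rw [mul_assoc, pow_mul ζ d]
    _ = ((μ : ArithmeticFunction R) * idDvd R q) n := by
        rw [mul_apply,
          Nat.sum_divisorsAntidiagonal fun a b => (μ : ArithmeticFunction R) a * idDvd R q b]
        simp only [intCoe_apply]

theorem ramanujanSum_eq_moebius_mul_idDvd (n q : ℕ) :
    ramanujanSum n q = ((μ : ArithmeticFunction ℂ) * idDvd ℂ q) n := by
  rcases eq_or_ne n 0 with rfl | hn
  · simp [ramanujanSum]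
  rw [ramanujanSum, ← (Complex.isPrimitiveRoot_exp n hn).sum_Icc_coprime_pow_mul q]
  refine sum_congr rfl fun k _ => ?_
  rw [← Complex.exp_nat_mul]
  congr 1
  push_cast
  ring

theorem ramanujanSum_mul_of_coprime {m n : ℕ} (h : m.Coprime n) (q : ℕ) :
    ramanujanSum (m * n) q = ramanujanSum m q * ramanujanSum n q := by
  simp only [ramanujanSum_eq_moebius_mul_idDvd]
  exact (isMultiplicative_moebius.intCast.mul (isMultiplicative_idDvd q)).map_mul_of_coprime h

theorem ramanujanSum_eq_sum_divisors_gcd (n q : ℕ) :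
    ramanujanSum n q = ∑ d ∈ (n.gcd q).divisors, (d : ℂ) * (μ (n / d) : ℤ) := by
  rcases eq_or_ne n 0 with rfl | hn
  · simp [ramanujanSum]
  rw [ramanujanSum_eq_moebius_mul_idDvd, mul_apply,
    Nat.sum_divisorsAntidiagonal' fun a b => (μ : ArithmeticFunction ℂ) a * idDvd ℂ q b,
    ← Nat.divisors_filter_dvd_of_dvd hn (Nat.gcd_dvd_left n q), sum_filter]
  refine sum_congr rfl fun d hd => ?_
  simp [Nat.dvd_gcd_iff, Nat.dvd_of_mem_divisors hd, mul_comm]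

theorem ramanujanSum_congr_gcd {n q q' : ℕ} (h : n.gcd q = n.gcd q') :
    ramanujanSum n q = ramanujanSum n q' := by
  rw [ramanujanSum_eq_sum_divisors_gcd, h, ← ramanujanSum_eq_sum_divisors_gcd]

theorem ramanujanSum_mul_eq_sum_general (m n : ℕ) (h : Nat.Coprime m n) (q : ℕ) :
    ramanujanSum (m * n) q =
      ∑ d ∈ (Nat.gcd m q).divisors,
        (d : ℂ) * ramanujanSum n (q / d) * (moebius (m / d) : ℤ) := by
  calc ramanujanSum (m * n) q = ramanujanSum m q * ramanujanSum n q :=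
        ramanujanSum_mul_of_coprime h q
    _ = ∑ d ∈ (m.gcd q).divisors, (d : ℂ) * ramanujanSum n q * (μ (m / d) : ℤ) := by
        rw [ramanujanSum_eq_sum_divisors_gcd m, sum_mul]
        exact sum_congr rfl fun _ _ => by ring
    _ = _ := by
        refine sum_congr rfl fun d hd => ?_
        have hdm : d ∣ m.gcd q := Nat.dvd_of_mem_divisors hd
        have hdn : d.Coprime n := h.coprime_dvd_left (hdm.trans (m.gcd_dvd_left q))
        have hgcd : n.gcd q = n.gcd (q / d) := by
          rw [← hdn.gcd_mul_left_cancel_right (q / d),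
            Nat.mul_div_cancel' (hdm.trans (m.gcd_dvd_right q))]
        rw [ramanujanSum_congr_gcd hgcd]

theorem ramanujanSum_mul_eq_sum (m n : ℕ) (hm : 0 < m) (hn : 0 < n)
    (h : Nat.Coprime m n) (q : ℕ) (hq : 0 < q) :
    ramanujanSum (m * n) q =
      ∑ d ∈ (Nat.gcd m q).divisors,
        (d : ℂ) * ramanujanSum n (q / d) * (moebius (m / d) : ℤ) :=
  ramanujanSum_mul_eq_sum_general m n h q
end

section
/- Let n > 1, let N = φ(n) be the degree of the n-th cyclotomic polynomial, and write Φ_n(X) = ∑_{k=0}^{N} a_k(n) X^k. Then a_N(n) = 1 and for every ℓ with 1 ≤ ℓ ≤ N−1, a_{N−ℓ}(n) = −(1/ℓ) · ∑_{j=0}^{ℓ−1} a_{N−j}(n) · c_n(ℓ−j), where c_n(q) = ∑_{1 ≤ k ≤ n, gcd(k,n)=1} e^{2πikq/n} is the Ramanujan sum (the identity being read in ℂ). -/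
open Polynomial

open Finset in
/-- Newton's identity evaluated at the elements of a finite set of complex numbers. -/
lemma newton_eval (S : Finset ℂ) (k : ℕ) :
    (k : ℂ) * S.val.esymm k = (-1) ^ (k + 1) *
      ∑ a ∈ (antidiagonal k).filter (fun a => a.1 < k),
        (-1) ^ a.1 * S.val.esymm a.1 * ∑ z ∈ S, z ^ a.2 := by
  classical
  have h := congrArg (MvPolynomial.aeval (fun i : ↥S => (i : ℂ)))
    (MvPolynomial.mul_esymm_eq_sum ↥S ℂ k)
  have hesymm : ∀ m : ℕ, MvPolynomial.aeval (fun i : ↥S => (i : ℂ))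
      (MvPolynomial.esymm ↥S ℂ m) = S.val.esymm m := by
    intro m
    rw [MvPolynomial.aeval_esymm_eq_multiset_esymm]
    congr 1
    rw [Finset.univ_eq_attach, Finset.attach_val]; exact Multiset.attach_map_val _
  have hpsum : ∀ m : ℕ, MvPolynomial.aeval (fun i : ↥S => (i : ℂ))
      (MvPolynomial.psum ↥S ℂ m) = ∑ z ∈ S, z ^ m := by
    intro m
    rw [MvPolynomial.psum]
    simp only [map_sum, map_pow, MvPolynomial.aeval_X, Finset.univ_eq_attach]
    exact Finset.sum_attach _ _
  simp only [map_mul, map_sum, map_pow, map_neg, map_one, map_natCast, hesymm, hpsum] at h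
  exact h

open Finset in
lemma antidiagonal_filter_sum (ℓ : ℕ) (g : ℕ × ℕ → ℂ) :
    ∑ a ∈ (antidiagonal ℓ).filter (fun a => a.1 < ℓ), g a =
      ∑ j ∈ range ℓ, g (j, ℓ - j) := by
  rw [Finset.sum_filter, Finset.Nat.sum_antidiagonal_eq_sum_range_succ_mk,
    Finset.sum_range_succ, if_neg (lt_irrefl ℓ), add_zero]
  exact Finset.sum_congr rfl fun j hj => if_pos (mem_range.mp hj)

/-- The coefficients of the `n`-th cyclotomic polynomial can be computed
recursively from the Ramanujan sums via the Newton relations. -/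
theorem cyclotomic_coeff_recursion (n : ℕ) (hn : 1 < n) :
    ((cyclotomic n ℤ).coeff (Nat.totient n) : ℂ) = 1 ∧
    ∀ ℓ : ℕ, 1 ≤ ℓ → ℓ ≤ Nat.totient n - 1 →
      ((cyclotomic n ℤ).coeff (Nat.totient n - ℓ) : ℂ) =
        -(1 / (ℓ : ℂ)) * ∑ j ∈ Finset.range ℓ,
          ((cyclotomic n ℤ).coeff (Nat.totient n - j) : ℂ) * ramanujanSum n (ℓ - j) := by
  classical
  haveI : NeZero n := ⟨by omega⟩
  set N := Nat.totient n with hN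
  have hζ : IsPrimitiveRoot (Complex.exp (2 * Real.pi * Complex.I / n)) n :=
    Complex.isPrimitiveRoot_exp n (by omega)
  set S := primitiveRoots n ℂ with hSdef
  -- leading coefficient
  have hlead : ((cyclotomic n ℤ).coeff N : ℂ) = 1 := by
    have : (cyclotomic n ℤ).coeff N = 1 := by
      have h := (cyclotomic.monic n ℤ).coeff_natDegree
      rwa [natDegree_cyclotomic] at h
    rw [this]; norm_num
  refine ⟨hlead, fun ℓ hℓ1 hℓ2 => ?_⟩
  have hN1 : 1 ≤ N := Nat.totient_pos.mpr (by omega)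
  have hℓN : ℓ ≤ N := by omega
  -- the filtered Icc equals the filtered range
  have hfr : (Finset.Icc 1 n).filter (fun k => Nat.gcd k n = 1) =
      (Finset.range n).filter (fun k => Nat.gcd k n = 1) := by
    ext k
    simp only [Finset.mem_filter, Finset.mem_Icc, Finset.mem_range]
    constructor
    · rintro ⟨⟨h1, h2⟩, h3⟩
      have : k ≠ n := by rintro rfl; rw [Nat.gcd_self] at h3; omega
      exact ⟨by omega, h3⟩
    · rintro ⟨h1, h3⟩
      have : k ≠ 0 := by rintro rfl; rw [Nat.gcd_zero_left] at h3; omega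
      exact ⟨⟨by omega, by omega⟩, h3⟩
  -- primitive roots as an image
  have hS : S = ((Finset.Icc 1 n).filter (fun k => Nat.gcd k n = 1)).image
      (fun k => Complex.exp (2 * Real.pi * Complex.I / n) ^ k) := by
    rw [hfr]
    ext z
    rw [hSdef, mem_primitiveRoots (by omega : 0 < n), hζ.isPrimitiveRoot_iff]
    simp only [Finset.mem_image, Finset.mem_filter, Finset.mem_range]
    constructor
    · rintro ⟨i, hi, hc, rfl⟩; exact ⟨i, ⟨hi, hc⟩, rfl⟩
    · rintro ⟨i, ⟨hi, hc⟩, rfl⟩; exact ⟨i, hi, hc, rfl⟩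
  have hsub : (Finset.Icc 1 n).filter (fun k => Nat.gcd k n = 1) ⊆ Finset.range n := by
    rw [hfr]; exact Finset.filter_subset _ _
  -- power sums are Ramanujan sums
  have hP : ∀ q : ℕ, ramanujanSum n q = ∑ z ∈ S, z ^ q := by
    intro q
    rw [hS, Finset.sum_image (fun i hi j hj h => hζ.pow_inj (Finset.mem_range.mp (hsub hi))
        (Finset.mem_range.mp (hsub hj)) h)]
    unfold ramanujanSum
    refine Finset.sum_congr rfl fun k hk => ?_
    rw [← pow_mul, ← Complex.exp_nat_mul]
    congr 1
    push_cast
    ring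
  -- coefficients via elementary symmetric functions
  have hcard : Multiset.card S.val = N := by
    simpa using hζ.card_primitiveRoots
  have hc : ∀ m : ℕ, m ≤ N → ((cyclotomic n ℤ).coeff (N - m) : ℂ) =
      (-1) ^ m * S.val.esymm m := by
    intro m hm
    have h1 : ((cyclotomic n ℤ).coeff (N - m) : ℂ) = (cyclotomic n ℂ).coeff (N - m) := by
      rw [← map_cyclotomic_int n ℂ, coeff_map]
      simp
    rw [h1, cyclotomic_eq_prod_X_sub_primitiveRoots hζ, Finset.prod,
      Multiset.prod_X_sub_C_coeff _ (by omega : N - m ≤ Multiset.card S.val)]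
    rw [hcard]
    congr 2 <;> omega
  -- Newton's identity for k = ℓ, reindexed over range ℓ
  have hnewton : (ℓ : ℂ) * S.val.esymm ℓ = (-1) ^ (ℓ + 1) *
      ∑ j ∈ Finset.range ℓ, (-1) ^ j * S.val.esymm j * ∑ z ∈ S, z ^ (ℓ - j) := by
    rw [newton_eval S ℓ, antidiagonal_filter_sum ℓ
      (fun a => (-1) ^ a.1 * S.val.esymm a.1 * ∑ z ∈ S, z ^ a.2)]
  -- rewrite the goal
  rw [hc ℓ hℓN]
  have hsum : ∑ j ∈ Finset.range ℓ,
      ((cyclotomic n ℤ).coeff (N - j) : ℂ) * ramanujanSum n (ℓ - j) =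
      ∑ j ∈ Finset.range ℓ, (-1) ^ j * S.val.esymm j * ∑ z ∈ S, z ^ (ℓ - j) := by
    refine Finset.sum_congr rfl fun j hj => ?_
    have hjN : j ≤ N := le_trans (le_of_lt (Finset.mem_range.mp hj)) hℓN
    rw [hc j hjN, hP (ℓ - j)]
  rw [hsum]
  set T := ∑ j ∈ Finset.range ℓ, (-1 : ℂ) ^ j * S.val.esymm j * ∑ z ∈ S, z ^ (ℓ - j) with hT
  set E := S.val.esymm ℓ with hE
  have hℓ0 : (ℓ : ℂ) ≠ 0 := Nat.cast_ne_zero.mpr (by omega)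
  set s : ℂ := (-1) ^ ℓ with hs'
  have hs : s * s = 1 := by rw [hs', ← mul_pow]; norm_num
  have hN' : (ℓ : ℂ) * E = -s * T := by
    rw [hnewton, pow_succ]; ring
  have key : (ℓ : ℂ) * (s * E) = (ℓ : ℂ) * (-(1 / (ℓ : ℂ)) * T) := by
    have h2 : (ℓ : ℂ) * (-(1 / (ℓ : ℂ)) * T) = -T := by
      field_simp
    rw [h2]
    linear_combination s * hN' - T * hs
  exact mul_left_cancel₀ hℓ0 key
end
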